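/- arXiv:1803.06592 — 3 statements merged into one kernel-verified Lean document; each statement's English description precedes it below -/
import Mathlib

section
/- For the Lie algebra $A_2 = \mathfrak{sl}_3$, the number of distinct weights of the finite-dimensional irreducible module with highest weight $\lambda = \lambda_1\omega_1 + \lambda_2\omega_2$ (with $\lambda_1, \lambda_2 \in \mathbb{N}_0$) equals $1 + \tfrac{3}{2}(\lambda_1+\lambda_2) + \tfrac{1}{2}(\lambda_1^2 + \lambda_2^2 + 4\lambda_1\lambda_2)$. -/
/-- The simple root `α_i`, written in fundamental-weight (Dynkin-label) coordinates:
its `j`-th Dynkin label is the Cartan matrix entry `A_{ji} = ⟨α_j^∨, α_i⟩`. -/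
def colRoot {r : ℕ} (A : Fin r → Fin r → ℤ) (i : Fin r) : Fin r → ℤ := fun j => A j i

/-- The simple reflection `s_i` on the weight lattice: `s_i(μ) = μ - μ_i α_i`. -/
def simpleRefl {r : ℕ} (A : Fin r → Fin r → ℤ) (i : Fin r) :
    (Fin r → ℤ) → (Fin r → ℤ) :=
  fun μ => μ - μ i • colRoot A i

/-- The Weyl group of the Cartan matrix `A`, realized as the monoid of maps of the weight
lattice generated by the simple reflections (for a finite Weyl group, which consists of
involutions, this closure coincides with the generated group). -/
def weylMonoid {r : ℕ} (A : Fin r → Fin r → ℤ) : Submonoid (Function.End (Fin r → ℤ)) :=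
  Submonoid.closure (Set.range (simpleRefl A))

/-- `μ ≤ λ` in the dominance (root) order: `λ - μ` is a non-negative integer combination
of the simple roots. -/
def rootLE {r : ℕ} (A : Fin r → Fin r → ℤ) (μ lam : Fin r → ℤ) : Prop :=
  ∃ n : Fin r → ℕ, lam = μ + ∑ i, (n i : ℤ) • colRoot A i

/-- The set `P(λ)` of distinct weights of the finite-dimensional irreducible
highest-weight module `L(λ)`: by the classical saturation theorem, for dominant integral
`λ` these are exactly the integral weights `μ` all of whose Weyl conjugates satisfy
`w(μ) ≤ λ` in the dominance order. -/
def weightSet {r : ℕ} (A : Fin r → Fin r → ℤ) (lam : Fin r → ℤ) : Set (Fin r → ℤ) :=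
  {μ | ∀ w ∈ weylMonoid A, rootLE A (w μ) lam}

/-- The Cartan matrix of `A₂ = 𝔰𝔩₃`. -/
def cartanA2 : Fin 2 → Fin 2 → ℤ := ![![2, -1], ![-1, 2]]

/-!
Write a weight as `μ = λ - a α₁ - b α₂`. In the coordinates `(a, b)` the simple reflections act
by `s₁ (a, b) = (λ₁ + b - a, b)` and `s₂ (a, b) = (a, λ₂ + a - b)`, and `μ ≤ λ` means `a, b ≥ 0`.
Applying this to `μ`, `s₁ μ`, `s₂ μ`, `s₁ s₂ μ`, `s₂ s₁ μ` cuts out the hexagon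
`0 ≤ a, b ≤ λ₁ + λ₂`, `a - b ≤ λ₁`, `b - a ≤ λ₂`, which is itself stable under `s₁, s₂`, so it is
exactly `P(λ)`. Its rows `a = 0, …, λ₁` have `a + λ₂ + 1` points and its rows `a = λ₁ + 1 + i`
have `λ₁ + λ₂ - i` points; summing these arithmetic progressions gives the claimed polynomial.
-/

open Finset

section Weyl

variable {r : ℕ} {A : Fin r → Fin r → ℤ}

lemma simpleRefl_mem_weylMonoid (i : Fin r) : simpleRefl A i ∈ weylMonoid A :=
  Submonoid.subset_closure ⟨i, rfl⟩

lemma mapsTo_of_mem_weylMonoid {S : Set (Fin r → ℤ)}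
    (hS : ∀ i, Set.MapsTo (simpleRefl A i) S S) {w : Function.End (Fin r → ℤ)}
    (hw : w ∈ weylMonoid A) : Set.MapsTo w S S := by
  induction hw using Submonoid.closure_induction with
  | mem _ hx => obtain ⟨i, rfl⟩ := hx; exact hS i
  | one => exact Set.mapsTo_id S
  | mul _ _ _ _ hx hy => exact hx.comp hy

lemma subset_weightSet {S : Set (Fin r → ℤ)} {lam : Fin r → ℤ}
    (hS : ∀ i, Set.MapsTo (simpleRefl A i) S S) (hle : ∀ μ ∈ S, rootLE A μ lam) :
    S ⊆ weightSet A lam :=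
  fun _ hμ _ hw => hle _ (mapsTo_of_mem_weylMonoid hS hw hμ)

variable {lam μ : Fin r → ℤ}

lemma rootLE_of_mem_weightSet (h : μ ∈ weightSet A lam) : rootLE A μ lam :=
  h 1 (one_mem _)

lemma rootLE_simpleRefl_of_mem_weightSet (h : μ ∈ weightSet A lam) (i : Fin r) :
    rootLE A (simpleRefl A i μ) lam :=
  h _ (simpleRefl_mem_weylMonoid i)

lemma rootLE_simpleRefl_simpleRefl_of_mem_weightSet (h : μ ∈ weightSet A lam) (i j : Fin r) :
    rootLE A (simpleRefl A i (simpleRefl A j μ)) lam :=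
  h _ (mul_mem (simpleRefl_mem_weylMonoid i) (simpleRefl_mem_weylMonoid j))

end Weyl

lemma two_mul_sum_range_add (n c : ℕ) :
    2 * ∑ k ∈ range n, (k + c) = n * (n - 1) + 2 * n * c := by
  rw [sum_add_distrib, mul_add, mul_comm, sum_range_id_mul_two]
  simp only [sum_const, card_range, smul_eq_mul]
  ring

section Hexagon

variable (l1 l2 : ℕ)

def hexagon : Finset (ℕ × ℕ) :=
  (range (l1 + l2 + 1) ×ˢ range (l1 + l2 + 1)).filter fun p =>
    p.1 ≤ l1 + p.2 ∧ p.2 ≤ l2 + p.1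

variable {l1 l2} in
lemma mem_hexagon {a b : ℕ} :
    (a, b) ∈ hexagon l1 l2 ↔ a ≤ l1 + l2 ∧ b ≤ l1 + l2 ∧ a ≤ l1 + b ∧ b ≤ l2 + a := by
  simp only [hexagon, mem_filter, mem_product, mem_range]
  omega

lemma card_hexagon :
    #(hexagon l1 l2) = ∑ a ∈ range (l1 + 1), (a + (l2 + 1)) + ∑ j ∈ range l2, (j + (l1 + 1)) := by
  let row a := #((range (l1 + l2 + 1)).filter fun b => a ≤ l1 + b ∧ b ≤ l2 + a)
  have h_low (a : ℕ) (ha : a ∈ range (l1 + 1)) : row a = a + (l2 + 1) := by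
    rw [mem_range] at ha
    rw [← card_range (a + (l2 + 1))]
    simp only [row]; congr 1; ext b; simp only [mem_filter, mem_range]; omega
  have h_high (i : ℕ) (hi : i ∈ range l2) : row (l1 + 1 + i) = (l2 - 1 - i) + (l1 + 1) := by
    rw [mem_range] at hi
    rw [show l2 - 1 - i + (l1 + 1) = l1 + l2 + 1 - (i + 1) by omega, ← Nat.card_Ico]
    simp only [row]; congr 1; ext b; simp only [mem_filter, mem_range, mem_Ico]; omega
  calc #(hexagon l1 l2) = ∑ a ∈ range (l1 + l2 + 1), row a := by
        rw [hexagon, card_filter, sum_product]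
        simp only [row, card_filter]
    _ = _ := by
        rw [add_right_comm, sum_range_add, sum_congr rfl h_low, sum_congr rfl h_high,
          sum_range_reflect (fun j => j + (l1 + 1))]

lemma two_mul_card_hexagon :
    2 * #(hexagon l1 l2) = 2 + 3 * (l1 + l2) + l1 ^ 2 + l2 ^ 2 + 4 * l1 * l2 := by
  rw [card_hexagon, mul_add, two_mul_sum_range_add, two_mul_sum_range_add, Nat.add_sub_cancel]
  rcases l2 with _ | l2
  · ring
  · rw [Nat.add_sub_cancel]; ring

end Hexagon

section A2

variable (l1 l2 : ℕ)

/-- The weight `λ - a α₁ - b α₂`, where `λ = l1 ω₁ + l2 ω₂`. -/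
def a2Weight (a b : ℤ) : Fin 2 → ℤ := ![l1 - 2 * a + b, l2 + a - 2 * b]

variable {l1 l2}

lemma a2Weight_inj {a b a' b' : ℤ} :
    a2Weight l1 l2 a b = a2Weight l1 l2 a' b' ↔ a = a' ∧ b = b' := by
  refine ⟨fun h => ?_, fun h => by rw [h.1, h.2]⟩
  have h0 := congrFun h 0
  have h1 := congrFun h 1
  simp only [a2Weight, Matrix.cons_val_zero, Matrix.cons_val_one] at h0 h1
  omega

lemma simpleRefl_zero_a2Weight (a b : ℤ) :
    simpleRefl cartanA2 0 (a2Weight l1 l2 a b) = a2Weight l1 l2 (l1 + b - a) b := by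
  funext j; fin_cases j <;> simp [simpleRefl, colRoot, cartanA2, a2Weight] <;> ring

lemma simpleRefl_one_a2Weight (a b : ℤ) :
    simpleRefl cartanA2 1 (a2Weight l1 l2 a b) = a2Weight l1 l2 a (l2 + a - b) := by
  funext j; fin_cases j <;> simp [simpleRefl, colRoot, cartanA2, a2Weight] <;> ring

lemma rootLE_cartanA2_iff {μ : Fin 2 → ℤ} :
    rootLE cartanA2 μ ![(l1 : ℤ), (l2 : ℤ)] ↔ ∃ a b : ℕ, μ = a2Weight l1 l2 a b := by
  have key (μ : Fin 2 → ℤ) (a b : ℕ) :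
      ![(l1 : ℤ), (l2 : ℤ)] = μ + ∑ i, (![a, b] i : ℤ) • colRoot cartanA2 i ↔
        μ = a2Weight l1 l2 a b := by
    simp only [funext_iff, Fin.forall_fin_two]
    simp only [Fin.isValue, Matrix.cons_val_zero, Matrix.cons_val_one, Matrix.cons_val_fin_one,
      Pi.add_apply, Fin.sum_univ_two, Pi.smul_apply, colRoot, cartanA2, a2Weight,
      smul_eq_mul, mul_neg, mul_one]
    omega
  constructor
  · rintro ⟨n, hn⟩
    refine ⟨n 0, n 1, (key μ _ _).1 ?_⟩
    convert hn using 4 with i; fin_cases i <;> rfl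
  · rintro ⟨a, b, hμ⟩
    exact ⟨![a, b], (key μ a b).2 hμ⟩

lemma rootLE_a2Weight_iff {a b : ℤ} :
    rootLE cartanA2 (a2Weight l1 l2 a b) ![(l1 : ℤ), (l2 : ℤ)] ↔ 0 ≤ a ∧ 0 ≤ b := by
  simp only [rootLE_cartanA2_iff, a2Weight_inj]
  refine ⟨fun ⟨a', b', ha, hb⟩ => by omega, fun h => ⟨a.toNat, b.toNat, by omega, by omega⟩⟩

lemma mapsTo_simpleRefl_hexagon (i : Fin 2) :
    Set.MapsTo (simpleRefl cartanA2 i) ((fun p : ℕ × ℕ => a2Weight l1 l2 p.1 p.2) '' hexagon l1 l2)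
      ((fun p : ℕ × ℕ => a2Weight l1 l2 p.1 p.2) '' hexagon l1 l2) := by
  fin_cases i <;> rintro _ ⟨⟨a, b⟩, hp, rfl⟩ <;> rw [mem_coe, mem_hexagon] at hp
  · refine ⟨(l1 + b - a, b), mem_hexagon.2 (by omega), ?_⟩
    simp only [Fin.zero_eta, simpleRefl_zero_a2Weight, a2Weight_inj, and_true]
    omega
  · refine ⟨(a, l2 + a - b), mem_hexagon.2 (by omega), ?_⟩
    simp only [Fin.mk_one, simpleRefl_one_a2Weight, a2Weight_inj, true_and]
    omega

lemma weightSet_cartanA2 :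
    weightSet cartanA2 ![(l1 : ℤ), (l2 : ℤ)] =
      (fun p : ℕ × ℕ => a2Weight l1 l2 p.1 p.2) '' hexagon l1 l2 := by
  refine subset_antisymm (fun μ hμ => ?_) (subset_weightSet mapsTo_simpleRefl_hexagon ?_)
  · obtain ⟨a, b, rfl⟩ := rootLE_cartanA2_iff.1 (rootLE_of_mem_weightSet hμ)
    have hs0 := rootLE_simpleRefl_of_mem_weightSet hμ 0
    have hs1 := rootLE_simpleRefl_of_mem_weightSet hμ 1
    have hs01 := rootLE_simpleRefl_simpleRefl_of_mem_weightSet hμ 0 1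
    have hs10 := rootLE_simpleRefl_simpleRefl_of_mem_weightSet hμ 1 0
    simp only [simpleRefl_zero_a2Weight, simpleRefl_one_a2Weight, rootLE_a2Weight_iff]
      at hs0 hs1 hs01 hs10
    exact ⟨(a, b), mem_hexagon.2 (by omega), rfl⟩
  · rintro _ ⟨p, -, rfl⟩
    exact rootLE_cartanA2_iff.2 ⟨p.1, p.2, rfl⟩

end A2

/-- for `A₂ = 𝔰𝔩₃`, the number of distinct weights of the irreducible module
`L(λ₁ω₁ + λ₂ω₂)` (with `λ₁, λ₂ ∈ ℕ`) equals
`1 + (3/2)(λ₁+λ₂) + ½(λ₁² + λ₂² + 4λ₁λ₂)`. -/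
theorem stmt_2 (l1 l2 : ℕ) :
    ((weightSet cartanA2 ![(l1 : ℤ), (l2 : ℤ)]).ncard : ℚ)
      = 1 + (3/2) * ((l1 : ℚ) + l2) + (1/2) * ((l1 : ℚ)^2 + (l2 : ℚ)^2 + 4 * l1 * l2) := by
  have h_inj : Set.InjOn (fun p : ℕ × ℕ => a2Weight l1 l2 p.1 p.2) (hexagon l1 l2) :=
    fun p _ q _ h => Prod.ext_iff.2 (by simpa [a2Weight_inj] using h)
  rw [weightSet_cartanA2, h_inj.ncard_image, Set.ncard_coe_finset]
  have h : 2 * (#(hexagon l1 l2) : ℚ) = 2 + 3 * (l1 + l2) + l1 ^ 2 + l2 ^ 2 + 4 * l1 * l2 := by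
    exact_mod_cast two_mul_card_hexagon l1 l2
  linarith
end

section
/- For the Lie algebra $B_r = \mathfrak{so}_{2r+1}$ and any $n \in \mathbb{N}_0$, the number of distinct weights of the irreducible module with highest weight $n\omega_r$ (the $n$-th Cartan power of the spin representation) equals $(1+n)^r$. -/
/-- The Cartan matrix of `B_r = 𝔰𝔬_{2r+1}`, with `α_r` the short simple root:
tridiagonal with `2` on the diagonal, `-1` on the adjacent off-diagonals, except
`⟨α_r^∨, α_{r-1}⟩ = -2`. -/
def cartanB (r : ℕ) : Fin r → Fin r → ℤ :=
  fun i j => if i = j then 2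
    else if (i : ℕ) = r - 1 ∧ (j : ℕ) + 2 = r then -2
    else if (i : ℕ) + 1 = (j : ℕ) ∨ (j : ℕ) + 1 = (i : ℕ) then -1 else 0

def dcoef (r : ℕ) (k j : Fin r) : ℤ :=
  if (j:ℕ)+1 = r then 1 else if (k:ℕ) ≤ (j:ℕ) then 2 else 0

def dmap (r : ℕ) (μ : Fin r → ℤ) (k : Fin r) : ℤ := ∑ j, dcoef r k j * μ j

def boxSet (r n : ℕ) : Set (Fin r → ℤ) :=
  {μ | ∀ k : Fin r, ((2:ℤ) ∣ (n:ℤ) - dmap r μ k) ∧ -(n:ℤ) ≤ dmap r μ k ∧ dmap r μ k ≤ n}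

lemma sum_ind {r : ℕ} (f : Fin r → ℤ) (t : ℕ) (ht : t < r) :
    ∑ j : Fin r, (if (j:ℕ) = t then f j else 0) = f ⟨t, ht⟩ := by
  have h : ∀ j : Fin r, (if (j:ℕ) = t then f j else 0) = (if j = ⟨t,ht⟩ then f j else 0) := by
    intro j
    refine if_congr ?_ rfl rfl
    simp [Fin.ext_iff]
  simp_rw [h]
  simp [Finset.sum_ite_eq' Finset.univ (⟨t,ht⟩ : Fin r) f]

lemma sum_ind0 {r : ℕ} (f : Fin r → ℤ) (t : ℕ) (ht : ¬ t < r) :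
    ∑ j : Fin r, (if (j:ℕ) = t then f j else 0) = 0 := by
  apply Finset.sum_eq_zero
  intro j _
  rw [if_neg]
  omega

lemma dmap_col (r : ℕ) (i k : Fin r) :
    dmap r (colRoot (cartanB r) i) k =
      (if k = i then 2 else 0) + (if (k:ℕ) = (i:ℕ)+1 then -2 else 0) := by
  have hi := i.isLt
  have hk := k.isLt
  set a : ℤ := (if (i:ℕ)+1 = r then 1 else if (k:ℕ) ≤ (i:ℕ) then 2 else 0) * 2 with ha
  set b : ℤ := (if (i:ℕ)+2 = r then 1 else if (k:ℕ) ≤ (i:ℕ)+1 then 2 else 0) *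
      (if (i:ℕ)+2 = r then -2 else -1) with hb
  set c : ℤ := (if (k:ℕ)+1 ≤ (i:ℕ) then 2 else 0) * (-1) with hc
  have P1 : ∀ j : Fin r, dcoef r k j * colRoot (cartanB r) i j =
      (if (j:ℕ) = (i:ℕ) then a else 0) + (if (j:ℕ) = (i:ℕ)+1 then b else 0)
        + (if (j:ℕ)+1 = (i:ℕ) then c else 0) := by
    intro j
    have hj := j.isLt
    simp only [colRoot, cartanB, dcoef, Fin.ext_iff, ha, hb, hc]
    split_ifs <;> omega
  simp only [dmap]
  rw [Finset.sum_congr rfl (fun j _ => P1 j), Finset.sum_add_distrib,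
    Finset.sum_add_distrib]
  rw [sum_ind (fun _ => a) (i:ℕ) hi]
  have h2 : (∑ j : Fin r, if (j:ℕ) = (i:ℕ)+1 then b else 0)
      = if (i:ℕ)+1 < r then b else 0 := by
    split_ifs with h
    · exact sum_ind (fun _ => b) _ h
    · exact sum_ind0 (fun _ => b) _ h
  have h3 : (∑ j : Fin r, if (j:ℕ)+1 = (i:ℕ) then c else 0)
      = if 1 ≤ (i:ℕ) then c else 0 := by
    split_ifs with h
    · have hcond : ∀ j : Fin r, (if (j:ℕ)+1 = (i:ℕ) then c else 0)
          = (if (j:ℕ) = (i:ℕ)-1 then c else 0) := by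
        intro j
        refine if_congr ?_ rfl rfl
        omega
      simp_rw [hcond]
      exact sum_ind (fun _ => c) _ (by omega)
    · apply Finset.sum_eq_zero
      intro j _
      rw [if_neg]
      omega
  rw [h2, h3]
  simp only [ha, hb, hc, Fin.ext_iff]
  split_ifs <;> omega

lemma dmap_diff (r : ℕ) (μ : Fin r → ℤ) (t : ℕ) (ht : t + 1 < r) :
    dmap r μ ⟨t, by omega⟩ - dmap r μ ⟨t+1, ht⟩ = 2 * μ ⟨t, by omega⟩ := by
  have h : ∀ j : Fin r, dcoef r ⟨t, by omega⟩ j * μ j - dcoef r ⟨t+1, ht⟩ j * μ j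
      = (if (j:ℕ) = t then 2 * μ j else 0) := by
    intro j
    have hj := j.isLt
    simp only [dcoef]
    split_ifs <;> push_cast <;> first | omega | ring_nf <;> omega
  simp only [dmap]
  rw [← Finset.sum_sub_distrib, Finset.sum_congr rfl (fun j _ => h j),
    sum_ind (fun j => 2 * μ j) t (by omega)]

lemma dmap_last (r : ℕ) (μ : Fin r → ℤ) (k : Fin r) (hk : (k:ℕ)+1 = r) :
    dmap r μ k = μ k := by
  have h : ∀ j : Fin r, dcoef r k j * μ j = (if (j:ℕ) = (k:ℕ) then μ j else 0) := by
    intro j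
    have hj := j.isLt
    simp only [dcoef]
    split_ifs <;> first | omega | (exfalso; omega) | simp | ring
  simp only [dmap]
  rw [Finset.sum_congr rfl (fun j _ => h j), sum_ind μ _ k.isLt]

lemma dmap_lam (r n : ℕ) (hr : 0 < r) (k : Fin r) :
    dmap r (fun j => if (j : ℕ) = r - 1 then (n : ℤ) else 0) k = n := by
  have h : ∀ j : Fin r, dcoef r k j * (if (j : ℕ) = r - 1 then (n : ℤ) else 0)
      = (if (j:ℕ) = r-1 then (n:ℤ) else 0) := by
    intro j
    have hj := j.isLt
    simp only [dcoef]
    split_ifs <;> first | omega | ring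
  simp only [dmap]
  rw [Finset.sum_congr rfl (fun j _ => h j), sum_ind (fun _ => (n:ℤ)) _ (by omega)]

lemma rootLE_conseq {r n : ℕ} (hr : 0 < r) (μ : Fin r → ℤ)
    (h : rootLE (cartanB r) μ (fun j => if (j:ℕ) = r-1 then (n:ℤ) else 0)) :
    (∀ k : Fin r, (2:ℤ) ∣ (n:ℤ) - dmap r μ k) ∧ dmap r μ ⟨0, hr⟩ ≤ (n:ℤ) := by
  obtain ⟨m, hm⟩ := h
  have key : ∀ k : Fin r, (n:ℤ) - dmap r μ k
      = 2 * (m k : ℤ) - (if hk : 1 ≤ (k:ℕ) then 2 * (m ⟨(k:ℕ)-1, by omega⟩ : ℤ) else 0) := by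
    intro k
    have h1 : dmap r (fun j => if (j:ℕ) = r-1 then (n:ℤ) else 0) k
        = dmap r μ k + ∑ i : Fin r, (m i : ℤ) * dmap r (colRoot (cartanB r) i) k := by
      rw [hm]
      simp only [dmap, Pi.add_apply, Finset.sum_apply, Pi.smul_apply, smul_eq_mul, mul_add]
      rw [Finset.sum_add_distrib]
      congr 1
      calc ∑ j : Fin r, dcoef r k j * ∑ i : Fin r, (m i:ℤ) * colRoot (cartanB r) i j
          = ∑ j : Fin r, ∑ i : Fin r, (m i:ℤ) * (dcoef r k j * colRoot (cartanB r) i j) := by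
            refine Finset.sum_congr rfl fun j _ => ?_
            rw [Finset.mul_sum]
            exact Finset.sum_congr rfl fun i _ => by ring
        _ = ∑ i : Fin r, (m i:ℤ) * ∑ j : Fin r, dcoef r k j * colRoot (cartanB r) i j := by
            rw [Finset.sum_comm]
            exact Finset.sum_congr rfl fun i _ => (Finset.mul_sum _ _ _).symm
    rw [dmap_lam r n hr k] at h1
    have h2 : ∑ i : Fin r, (m i : ℤ) * dmap r (colRoot (cartanB r) i) k
        = 2 * (m k : ℤ) - (if hk : 1 ≤ (k:ℕ) then 2 * (m ⟨(k:ℕ)-1, by omega⟩ : ℤ) else 0) := by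
      have e1 : ∀ i : Fin r, (m i : ℤ) * dmap r (colRoot (cartanB r) i) k
          = (if (i:ℕ) = (k:ℕ) then 2 * (m i:ℤ) else 0)
            + (if (i:ℕ)+1 = (k:ℕ) then -2 * (m i:ℤ) else 0) := by
        intro i
        rw [dmap_col]
        by_cases h1 : (i:ℕ) = (k:ℕ)
        · rw [if_pos (Fin.ext h1.symm), if_pos h1, if_neg (by omega), if_neg (by omega)]
          ring
        · rw [if_neg (fun hc => h1 (by rw [hc])), if_neg h1]
          by_cases h2 : (i:ℕ)+1 = (k:ℕ)
          · rw [if_pos (by omega), if_pos h2]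
            ring
          · rw [if_neg (by omega), if_neg h2]
            ring
      rw [Finset.sum_congr rfl (fun i _ => e1 i), Finset.sum_add_distrib,
        sum_ind (fun i => 2 * (m i:ℤ)) (k:ℕ) k.isLt]
      have h3 : (∑ i : Fin r, if (i:ℕ)+1 = (k:ℕ) then -2 * (m i:ℤ) else 0)
          = (if hk : 1 ≤ (k:ℕ) then -2 * (m ⟨(k:ℕ)-1, by omega⟩ : ℤ) else 0) := by
        split_ifs with hk
        · have hcond : ∀ i : Fin r, (if (i:ℕ)+1 = (k:ℕ) then -2 * (m i:ℤ) else 0)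
              = (if (i:ℕ) = (k:ℕ)-1 then -2 * (m i:ℤ) else 0) := by
            intro i
            refine if_congr ?_ rfl rfl
            omega
          simp_rw [hcond]
          exact sum_ind (fun i => -2 * (m i:ℤ)) _ (by omega)
        · apply Finset.sum_eq_zero
          intro i _
          rw [if_neg]
          omega
      rw [h3]
      have : (⟨(k:ℕ), k.isLt⟩ : Fin r) = k := rfl
      rw [this]
      split_ifs <;> ring
    omega
  constructor
  · intro k
    have hthis := key k
    split_ifs at hthis with hk
    · exact ⟨(m k : ℤ) - (m ⟨(k:ℕ)-1, by omega⟩ : ℤ), by omega⟩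
    · exact ⟨(m k : ℤ), by omega⟩
  · have := key ⟨0, hr⟩
    rw [dif_neg (by simp)] at this
    have h0 : (0:ℤ) ≤ (m ⟨0,hr⟩ : ℤ) := Int.natCast_nonneg _
    omega

lemma dmap_refl_aux (r : ℕ) (i k : Fin r) (μ : Fin r → ℤ) :
    dmap r (simpleRefl (cartanB r) i μ) k
      = dmap r μ k - μ i * ((if k = i then 2 else 0) + (if (k:ℕ) = (i:ℕ)+1 then -2 else 0)) := by
  rw [← dmap_col r i k]
  simp only [dmap, simpleRefl, Pi.sub_apply, Pi.smul_apply, smul_eq_mul, mul_sub,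
    Finset.sum_sub_distrib, Finset.mul_sum]
  congr 1
  exact Finset.sum_congr rfl fun j _ => by ring

lemma fin_eta {r : ℕ} (k : Fin r) (h : (k:ℕ) < r) : (⟨(k:ℕ), h⟩ : Fin r) = k := rfl

lemma dmap_refl_swap1 (r : ℕ) (i : Fin r) (h : (i:ℕ)+1 < r) (μ : Fin r → ℤ) :
    dmap r (simpleRefl (cartanB r) i μ) i = dmap r μ ⟨(i:ℕ)+1, h⟩ := by
  rw [dmap_refl_aux, if_pos rfl, if_neg (by omega)]
  have := dmap_diff r μ (i:ℕ) h
  rw [fin_eta i i.isLt] at this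
  omega

lemma dmap_refl_swap2 (r : ℕ) (i : Fin r) (h : (i:ℕ)+1 < r) (μ : Fin r → ℤ) :
    dmap r (simpleRefl (cartanB r) i μ) ⟨(i:ℕ)+1, h⟩ = dmap r μ i := by
  rw [dmap_refl_aux, if_neg (by simp [Fin.ext_iff]), if_pos rfl]
  have := dmap_diff r μ (i:ℕ) h
  rw [fin_eta i i.isLt] at this
  omega

lemma dmap_refl_neg (r : ℕ) (i : Fin r) (h : (i:ℕ)+1 = r) (μ : Fin r → ℤ) :
    dmap r (simpleRefl (cartanB r) i μ) i = -(dmap r μ i) := by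
  rw [dmap_refl_aux, if_pos rfl, if_neg (by omega)]
  have := dmap_last r μ i h
  omega

lemma dmap_refl_other (r : ℕ) (i k : Fin r) (h1 : k ≠ i) (h2 : (k:ℕ) ≠ (i:ℕ)+1)
    (μ : Fin r → ℤ) :
    dmap r (simpleRefl (cartanB r) i μ) k = dmap r μ k := by
  rw [dmap_refl_aux, if_neg h1, if_neg h2]
  ring

lemma dmap_refl_swap1N (r t : ℕ) (h : t+1 < r) (μ : Fin r → ℤ) :
    dmap r (simpleRefl (cartanB r) ⟨t, by omega⟩ μ) ⟨t, by omega⟩ = dmap r μ ⟨t+1, h⟩ :=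
  dmap_refl_swap1 r ⟨t, by omega⟩ h μ

lemma dmap_refl_swap2N (r t : ℕ) (h : t+1 < r) (μ : Fin r → ℤ) :
    dmap r (simpleRefl (cartanB r) ⟨t, by omega⟩ μ) ⟨t+1, h⟩ = dmap r μ ⟨t, by omega⟩ :=
  dmap_refl_swap2 r ⟨t, by omega⟩ h μ

lemma dmap_refl_negN (r t : ℕ) (h : t+1 = r) (μ : Fin r → ℤ) :
    dmap r (simpleRefl (cartanB r) ⟨t, by omega⟩ μ) ⟨t, by omega⟩
      = -(dmap r μ ⟨t, by omega⟩) :=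
  dmap_refl_neg r ⟨t, by omega⟩ h μ

lemma box_refl {r n : ℕ} (i : Fin r) {μ : Fin r → ℤ} (hμ : μ ∈ boxSet r n) :
    simpleRefl (cartanB r) i μ ∈ boxSet r n := by
  intro k
  by_cases h1 : k = i
  · subst h1
    by_cases h2 : (k:ℕ)+1 < r
    · rw [dmap_refl_swap1 r k h2]
      exact hμ _
    · have h3 : (k:ℕ)+1 = r := by have := k.isLt; omega
      rw [dmap_refl_neg r k h3]
      obtain ⟨p, a, b⟩ := hμ k
      exact ⟨by omega, by omega, by omega⟩
  · by_cases h2 : (k:ℕ) = (i:ℕ)+1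
    · have hlt : (i:ℕ)+1 < r := h2 ▸ k.isLt
      have hk : k = ⟨(i:ℕ)+1, hlt⟩ := Fin.ext h2
      rw [hk, dmap_refl_swap2 r i hlt]
      exact hμ i
    · rw [dmap_refl_other r i k h1 h2]
      exact hμ k

lemma box_weyl {r n : ℕ} {w : Function.End (Fin r → ℤ)} (hw : w ∈ weylMonoid (cartanB r))
    {μ : Fin r → ℤ} (hμ : μ ∈ boxSet r n) : w μ ∈ boxSet r n := by
  revert μ
  induction hw using Submonoid.closure_induction with
  | mem x hx =>
      obtain ⟨i, rfl⟩ := hx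
      intro μ hμ
      exact box_refl i hμ
  | one => intro μ hμ; exact hμ
  | mul x y hx hy ihx ihy =>
      intro μ hμ
      exact ihx (ihy hμ)

lemma weightSet_refl {r : ℕ} {n : ℕ} (i : Fin r) {μ : Fin r → ℤ}
    (hμ : μ ∈ weightSet (cartanB r) (fun j => if (j:ℕ) = r-1 then (n:ℤ) else 0)) :
    simpleRefl (cartanB r) i μ ∈ weightSet (cartanB r) (fun j => if (j:ℕ) = r-1 then (n:ℤ) else 0) := by
  intro w hw
  let s : Function.End (Fin r → ℤ) := simpleRefl (cartanB r) i
  have hs : s ∈ weylMonoid (cartanB r) := Submonoid.subset_closure ⟨i, rfl⟩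
  exact hμ (w * s) (mul_mem hw hs)

lemma weight_ub {r n : ℕ} (hr : 0 < r) : ∀ t : ℕ, (ht : t < r) →
    ∀ μ ∈ weightSet (cartanB r) (fun j => if (j:ℕ) = r-1 then (n:ℤ) else 0),
      dmap r μ ⟨t, ht⟩ ≤ (n:ℤ) := by
  intro t
  induction t with
  | zero =>
      intro ht μ hμ
      exact (rootLE_conseq ht μ (hμ 1 (one_mem _))).2
  | succ s ih =>
      intro ht μ hμ
      have hs : s < r := by omega
      have h1 := ih hs (simpleRefl (cartanB r) ⟨s, hs⟩ μ) (weightSet_refl _ hμ)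
      rw [dmap_refl_swap1N r s ht μ] at h1
      exact h1

lemma weight_lb {r n : ℕ} (hr : 0 < r) : ∀ m t : ℕ, (h : t + m + 1 = r) →
    ∀ μ ∈ weightSet (cartanB r) (fun j => if (j:ℕ) = r-1 then (n:ℤ) else 0),
      -(n:ℤ) ≤ dmap r μ ⟨t, by omega⟩ := by
  intro m
  induction m with
  | zero =>
      intro t h μ hμ
      have h1 := weight_ub hr t (by omega) (simpleRefl (cartanB r) ⟨t, by omega⟩ μ)
        (weightSet_refl _ hμ)
      rw [dmap_refl_negN r t (by omega) μ] at h1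
      omega
  | succ s ih =>
      intro t h μ hμ
      have h1 := ih (t+1) (by omega) (simpleRefl (cartanB r) ⟨t, by omega⟩ μ)
        (weightSet_refl _ hμ)
      rw [dmap_refl_swap2N r t (by omega) μ] at h1
      exact h1

lemma weightSet_sub_box {r n : ℕ} (hr : 0 < r) {μ : Fin r → ℤ}
    (hμ : μ ∈ weightSet (cartanB r) (fun j => if (j:ℕ) = r-1 then (n:ℤ) else 0)) :
    μ ∈ boxSet r n := by
  intro k
  refine ⟨(rootLE_conseq hr μ (hμ 1 (one_mem _))).1 k, ?_, ?_⟩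
  · have := weight_lb (n := n) hr (r - 1 - (k:ℕ)) (k:ℕ) (by have := k.isLt; omega) μ hμ
    simpa using this
  · have := weight_ub (n := n) hr (k:ℕ) k.isLt μ hμ
    simpa using this

lemma box_rootLE {r n : ℕ} (hr : 0 < r) {μ : Fin r → ℤ} (hμ : μ ∈ boxSet r n) :
    rootLE (cartanB r) μ (fun j => if (j:ℕ) = r-1 then (n:ℤ) else 0) := by
  classical
  obtain ⟨eN, he⟩ : ∃ eN : ℕ → ℕ, ∀ (s : ℕ) (h : s < r),
      2 * (eN s : ℤ) = (n:ℤ) - dmap r μ ⟨s,h⟩ := by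
    refine ⟨fun s => if h : s < r then ((n:ℤ) - dmap r μ ⟨s,h⟩).toNat / 2 else 0, ?_⟩
    intro s h
    obtain ⟨P, a, b⟩ := hμ ⟨s,h⟩
    obtain ⟨c, hc⟩ := P
    simp only [dif_pos h]
    omega
  obtain ⟨NN, hrel0, hrel⟩ : ∃ NN : ℕ → ℕ, NN 0 = eN 0 ∧ ∀ t, NN (t+1) = NN t + eN (t+1) :=
    ⟨fun t => ∑ s ∈ Finset.range (t+1), eN s, by simp, fun t => Finset.sum_range_succ _ _⟩
  refine ⟨fun j => NN (j:ℕ), ?_⟩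
  funext p
  have hp := p.isLt
  simp only [Pi.add_apply, Finset.sum_apply, Pi.smul_apply, smul_eq_mul]
  set cL : ℤ := if (p:ℕ)+1 = r then -2 else -1 with hcL
  have P2 : ∀ i : Fin r, (NN (i:ℕ):ℤ) * colRoot (cartanB r) i p
      = (if (i:ℕ) = (p:ℕ) then 2*(NN (i:ℕ):ℤ) else 0)
        + (if (i:ℕ) = (p:ℕ)+1 then -(NN (i:ℕ):ℤ) else 0)
        + (if (i:ℕ)+1 = (p:ℕ) then cL*(NN (i:ℕ):ℤ) else 0) := by
    intro i
    have hi := i.isLt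
    simp only [colRoot, cartanB, Fin.ext_iff, hcL]
    split_ifs <;> first | ring1 | omega
  rw [Finset.sum_congr rfl (fun i _ => P2 i), Finset.sum_add_distrib, Finset.sum_add_distrib,
    sum_ind (fun i => 2*(NN (i:ℕ):ℤ)) (p:ℕ) hp]
  have h2 : (∑ i : Fin r, if (i:ℕ) = (p:ℕ)+1 then -(NN (i:ℕ):ℤ) else 0)
      = if (p:ℕ)+1 < r then -(NN ((p:ℕ)+1) : ℤ) else 0 := by
    split_ifs with h
    · rw [sum_ind (fun i => -(NN (i:ℕ):ℤ)) _ h]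
    · exact sum_ind0 (fun i => -(NN (i:ℕ):ℤ)) _ h
  have h3 : (∑ i : Fin r, if (i:ℕ)+1 = (p:ℕ) then cL*(NN (i:ℕ):ℤ) else 0)
      = if 1 ≤ (p:ℕ) then cL*(NN ((p:ℕ)-1):ℤ) else 0 := by
    split_ifs with h
    · have hcond : ∀ i : Fin r, (if (i:ℕ)+1 = (p:ℕ) then cL*(NN (i:ℕ):ℤ) else 0)
          = (if (i:ℕ) = (p:ℕ)-1 then cL*(NN (i:ℕ):ℤ) else 0) :=
        fun i => if_congr (by omega) rfl rfl
      simp_rw [hcond]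
      rw [sum_ind (fun i => cL*(NN (i:ℕ):ℤ)) _ (by omega : (p:ℕ)-1 < r)]
    · exact Finset.sum_eq_zero fun i _ => by rw [if_neg]; omega
  rw [h2, h3]
  simp only [Fin.eta]
  by_cases hlast : (p:ℕ)+1 = r
  · rw [if_pos (show (p:ℕ) = r-1 by omega), if_neg (show ¬ (p:ℕ)+1 < r by omega)]
    have hcLv : cL = -2 := by rw [hcL, if_pos hlast]
    have hd : dmap r μ p = μ p := dmap_last r μ p hlast
    have hep := he (p:ℕ) hp
    rw [Fin.eta] at hep
    by_cases h1 : 1 ≤ (p:ℕ)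
    · have hr2 := hrel ((p:ℕ)-1)
      rw [show (p:ℕ)-1+1 = (p:ℕ) by omega] at hr2
      rw [if_pos h1, hcLv]
      omega
    · rw [if_neg h1]
      have hp0 : (p:ℕ) = 0 := by omega
      have hA : NN (p:ℕ) = eN (p:ℕ) := by rw [hp0]; exact hrel0
      omega
  · have hlt : (p:ℕ)+1 < r := by omega
    rw [if_neg (show ¬ (p:ℕ) = r-1 by omega), if_pos hlt]
    have hcLv : cL = -1 := by rw [hcL, if_neg hlast]
    have hep := he (p:ℕ) hp
    rw [Fin.eta] at hep
    have hep1 := he ((p:ℕ)+1) hlt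
    have hdd := dmap_diff r μ (p:ℕ) hlt
    rw [Fin.eta] at hdd
    have hr1 := hrel (p:ℕ)
    by_cases h1 : 1 ≤ (p:ℕ)
    · have hr2 := hrel ((p:ℕ)-1)
      rw [show (p:ℕ)-1+1 = (p:ℕ) by omega] at hr2
      rw [if_pos h1, hcLv]
      omega
    · rw [if_neg h1]
      have hp0 : (p:ℕ) = 0 := by omega
      have hA : NN (p:ℕ) = eN (p:ℕ) := by rw [hp0]; exact hrel0
      omega

def FF (r n : ℕ) (k : Fin r → Fin (n+1)) : Fin r → ℤ :=
  fun i => if h : (i:ℕ)+1 < r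
    then ((k ⟨(i:ℕ)+1, h⟩ : ℕ) : ℤ) - ((k i : ℕ) : ℤ)
    else (n:ℤ) - 2*((k i : ℕ) : ℤ)

lemma dmap_FF (r n : ℕ) (hr : 0 < r) (k : Fin r → Fin (n+1)) :
    ∀ (m t : ℕ) (h : t + m + 1 = r),
      dmap r (FF r n k) ⟨t, by omega⟩ = (n:ℤ) - 2*((k ⟨t, by omega⟩ : ℕ) : ℤ) := by
  intro m
  induction m with
  | zero =>
      intro t h
      rw [dmap_last r _ ⟨t, by omega⟩ (by simpa using h)]
      exact dif_neg (show ¬ (t+1 < r) by omega)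
  | succ s ih =>
      intro t h
      have h1 : t + 1 + s + 1 = r := by omega
      have h2 := ih (t+1) h1
      have h3 := dmap_diff r (FF r n k) t (by omega)
      have h4 : FF r n k ⟨t, by omega⟩
          = ((k ⟨t+1, by omega⟩ : ℕ) : ℤ) - ((k ⟨t, by omega⟩ : ℕ) : ℤ) :=
        dif_pos (show t+1 < r by omega)
      rw [h4] at h3
      omega

lemma FF_inj (r n : ℕ) (hr : 0 < r) : Function.Injective (FF r n) := by
  intro k k' hkk
  funext q
  have h1 := dmap_FF r n hr k (r - 1 - (q:ℕ)) (q:ℕ) (by have := q.isLt; omega)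
  have h2 := dmap_FF r n hr k' (r - 1 - (q:ℕ)) (q:ℕ) (by have := q.isLt; omega)
  rw [hkk] at h1
  rw [h1] at h2
  have := q.isLt
  simp only [Fin.eta] at h2
  exact Fin.ext (by omega)

/-- for `B_r = 𝔰𝔬_{2r+1}` (`r ≥ 1`) and any `n ∈ ℕ`, the number of distinct
weights of the irreducible module with highest weight `nω_r` (the `n`-th Cartan power of
the spin representation) equals `(1+n)^r`. -/
theorem stmt_6 (r n : ℕ) (hr : 0 < r) :
    (weightSet (cartanB r) (fun j => if (j : ℕ) = r - 1 then (n : ℤ) else 0)).ncard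
      = (1 + n)^r := by
  have hbox : ∀ k : Fin r → Fin (n+1), FF r n k ∈ boxSet r n := by
    intro k q
    have h1 := dmap_FF r n hr k (r - 1 - (q:ℕ)) (q:ℕ) (by have := q.isLt; omega)
    simp only [Fin.eta] at h1
    have h2 : ((k q : ℕ) : ℤ) ≤ n := by
      have := (k q).isLt
      omega
    have h3 : (0:ℤ) ≤ ((k q : ℕ) : ℤ) := Int.natCast_nonneg _
    exact ⟨⟨(k q : ℕ), by omega⟩, by omega, by omega⟩
  have hset : weightSet (cartanB r) (fun j => if (j : ℕ) = r - 1 then (n : ℤ) else 0)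
      = Set.range (FF r n) := by
    ext μ
    constructor
    · intro hμ
      have hb := weightSet_sub_box hr hμ
      refine ⟨fun i => ⟨((n:ℤ) - dmap r μ i).toNat / 2, ?_⟩, ?_⟩
      · obtain ⟨P, a, b⟩ := hb i
        obtain ⟨c, hc⟩ := P
        omega
      · funext i
        simp only [FF]
        split_ifs with h
        · obtain ⟨P1, a1, b1⟩ := hb i
          obtain ⟨c1, hc1⟩ := P1
          obtain ⟨P2, a2, b2⟩ := hb ⟨(i:ℕ)+1, h⟩
          obtain ⟨c2, hc2⟩ := P2
          have hdd := dmap_diff r μ (i:ℕ) h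
          simp only [Fin.eta] at hdd
          try simp only [Fin.val_mk]
          omega
        · have hd := dmap_last r μ i (by have := i.isLt; omega)
          obtain ⟨P1, a1, b1⟩ := hb i
          obtain ⟨c1, hc1⟩ := P1
          try simp only [Fin.val_mk]
          omega
    · rintro ⟨k, rfl⟩
      intro w hw
      exact box_rootLE hr (box_weyl hw (hbox k))
  rw [hset, ← Set.image_univ, Set.ncard_image_of_injective _ (FF_inj r n hr),
    Set.ncard_univ]
  simp [Nat.card_eq_fintype_card, Nat.add_comm]
end

section
/- Let $\mathfrak{g}$ be a finite-dimensional simple complex Lie algebra, $\lambda, \mu$ dominant integral weights, and let $R$ be the layer polynomial, $R(\nu) = |P(\nu)|$, counting the number of distinct weights of $L(\nu)$. If $\mu < \lambda$ (i.e., $\lambda - \mu$ is a nonzero non-negative integer combination of simple roots), then $R(\mu) < R(\lambda)$. -/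
/-!
Averaging the dot product over the finite Weyl group `W` gives a positive definite `W`-invariant
form for which the `s_i` are orthogonal reflections. It makes the simple roots linearly
independent, so the dominance order is antisymmetric, and it bounds `P(λ)`, because the orbit sum
of a weight is `W`-invariant, hence zero. Since `P(μ) ⊆ P(λ)` by transitivity and `λ ∉ P(μ)` by
antisymmetry, it remains to see `λ ∈ P(λ)`, i.e. `w λ ≤ λ` for dominant `λ`. This follows by
induction on word length from the exchange property: either `w α_i` is a non-negative combination
of simple roots, or `w s_i` has a shorter expression. The exchange property is reduced, as in
Humphreys' treatment of Coxeter groups, to the rank-two subgroups `⟨s_i, s_j⟩`, where it holds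
because a combination `p α_i + q α_j` with `p q < 0` is longer than `α_i` and so is not a root.
-/

variable {r : ℕ} {A : Fin r → Fin r → ℤ}

variable (A) in
/-- `simpleRefl A i` as an element of `Function.End`: on the plain function type `*` would be the
pointwise product rather than composition. -/
def simpleReflEnd (i : Fin r) : Function.End (Fin r → ℤ) := simpleRefl A i

lemma simpleReflEnd_apply (i : Fin r) (μ : Fin r → ℤ) :
    simpleReflEnd A i μ = μ - μ i • colRoot A i := rfl

lemma simpleReflEnd_apply_apply (i : Fin r) (μ : Fin r → ℤ) (k : Fin r) :
    simpleReflEnd A i μ k = μ k - μ i * A k i := rfl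

lemma simpleReflEnd_colRoot_self (hdiag : ∀ i, A i i = 2) (i : Fin r) :
    simpleReflEnd A i (colRoot A i) = -colRoot A i := by
  funext k
  simp only [simpleReflEnd_apply_apply, colRoot, hdiag, Pi.neg_apply]
  ring

lemma simpleReflEnd_mul_self (hdiag : ∀ i, A i i = 2) (i : Fin r) :
    simpleReflEnd A i * simpleReflEnd A i = 1 := by
  funext μ k
  change simpleReflEnd A i (simpleReflEnd A i μ) k = μ k
  simp only [simpleReflEnd_apply_apply, hdiag]
  ring

lemma simpleReflEnd_mem_weylMonoid (i : Fin r) : simpleReflEnd A i ∈ weylMonoid A :=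
  Submonoid.subset_closure ⟨i, rfl⟩

lemma exists_linearMap_eq_of_mem_weylMonoid {w : Function.End (Fin r → ℤ)}
    (hw : w ∈ weylMonoid A) : ∃ f : Module.End ℤ (Fin r → ℤ), ⇑f = w := by
  induction hw using Submonoid.closure_induction with
  | mem w hw =>
    obtain ⟨i, rfl⟩ := hw
    exact ⟨LinearMap.id - (LinearMap.proj i).smulRight (colRoot A i), rfl⟩
  | one => exact ⟨LinearMap.id, rfl⟩
  | mul v w _ _ hv hw =>
    obtain ⟨f, rfl⟩ := hv
    obtain ⟨g, rfl⟩ := hw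
    exact ⟨f * g, rfl⟩

variable (A) in
def weylWord (l : List (Fin r)) : Function.End (Fin r → ℤ) := (l.map (simpleReflEnd A)).prod

@[simp] lemma weylWord_nil : weylWord A [] = 1 := rfl

@[simp] lemma weylWord_cons (i : Fin r) (l : List (Fin r)) :
    weylWord A (i :: l) = simpleReflEnd A i * weylWord A l := rfl

@[simp] lemma weylWord_append (l l' : List (Fin r)) :
    weylWord A (l ++ l') = weylWord A l * weylWord A l' := by
  simp [weylWord]

@[simp] lemma weylWord_singleton (i : Fin r) : weylWord A [i] = simpleReflEnd A i := rfl

lemma weylWord_mem_weylMonoid (l : List (Fin r)) : weylWord A l ∈ weylMonoid A := by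
  induction l with
  | nil => exact Submonoid.one_mem _
  | cons i l ih => exact Submonoid.mul_mem _ (simpleReflEnd_mem_weylMonoid i) ih

lemma exists_weylWord_eq_of_mem_weylMonoid {w : Function.End (Fin r → ℤ)}
    (hw : w ∈ weylMonoid A) : ∃ l, weylWord A l = w := by
  induction hw using Submonoid.closure_induction with
  | mem w hw =>
    obtain ⟨i, rfl⟩ := hw
    exact ⟨[i], rfl⟩
  | one => exact ⟨[], rfl⟩
  | mul v w _ _ hv hw =>
    obtain ⟨l, rfl⟩ := hv
    obtain ⟨l', rfl⟩ := hw
    exact ⟨l ++ l', weylWord_append l l'⟩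

section InvariantForm

variable (hfin : (weylMonoid A : Set (Function.End (Fin r → ℤ))).Finite)

noncomputable def weylForm : LinearMap.BilinForm ℤ (Fin r → ℤ) :=
  LinearMap.mk₂ ℤ (fun x y => ∑ w ∈ hfin.toFinset, w x ⬝ᵥ w y)
    (fun x y z => by
      rw [← Finset.sum_add_distrib]
      refine Finset.sum_congr rfl fun w hw => ?_
      obtain ⟨f, rfl⟩ := exists_linearMap_eq_of_mem_weylMonoid (hfin.mem_toFinset.1 hw)
      simp [add_dotProduct])
    (fun c x y => by
      rw [smul_eq_mul, Finset.mul_sum]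
      refine Finset.sum_congr rfl fun w hw => ?_
      obtain ⟨f, rfl⟩ := exists_linearMap_eq_of_mem_weylMonoid (hfin.mem_toFinset.1 hw)
      rw [map_smul, smul_dotProduct, smul_eq_mul])
    (fun x y z => by
      rw [← Finset.sum_add_distrib]
      refine Finset.sum_congr rfl fun w hw => ?_
      obtain ⟨f, rfl⟩ := exists_linearMap_eq_of_mem_weylMonoid (hfin.mem_toFinset.1 hw)
      simp [dotProduct_add])
    (fun c x y => by
      rw [smul_eq_mul, Finset.mul_sum]
      refine Finset.sum_congr rfl fun w hw => ?_
      obtain ⟨f, rfl⟩ := exists_linearMap_eq_of_mem_weylMonoid (hfin.mem_toFinset.1 hw)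
      rw [map_smul, dotProduct_smul, smul_eq_mul])

lemma weylForm_apply (x y : Fin r → ℤ) :
    weylForm hfin x y = ∑ w ∈ hfin.toFinset, w x ⬝ᵥ w y := rfl

lemma weylForm_comm (x y : Fin r → ℤ) : weylForm hfin x y = weylForm hfin y x := by
  simp only [weylForm_apply, dotProduct_comm]

lemma weylForm_self_pos {x : Fin r → ℤ} (hx : x ≠ 0) : 0 < weylForm hfin x x := by
  have hone : (1 : Function.End (Fin r → ℤ)) ∈ hfin.toFinset :=
    hfin.mem_toFinset.2 (Submonoid.one_mem _)
  have hpos : 0 < x ⬝ᵥ x :=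
    lt_of_le_of_ne (Finset.sum_nonneg fun k _ => mul_self_nonneg (x k))
      (Ne.symm (dotProduct_self_eq_zero.not.2 hx))
  calc 0 < x ⬝ᵥ x := hpos
    _ ≤ weylForm hfin x x :=
      Finset.single_le_sum (f := fun w : Function.End (Fin r → ℤ) => w x ⬝ᵥ w x)
        (fun w _ => Finset.sum_nonneg fun k _ => mul_self_nonneg (w x k)) hone

variable (hdiag : ∀ i, A i i = 2)
include hdiag

lemma sum_mul_simpleReflEnd {M : Type*} [AddCommMonoid M] (f : Function.End (Fin r → ℤ) → M)
    (i : Fin r) :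
    ∑ w ∈ hfin.toFinset, f (w * simpleReflEnd A i) = ∑ w ∈ hfin.toFinset, f w := by
  have hmem : ∀ w ∈ hfin.toFinset, w * simpleReflEnd A i ∈ hfin.toFinset := fun w hw =>
    hfin.mem_toFinset.2 (Submonoid.mul_mem _ (hfin.mem_toFinset.1 hw)
      (simpleReflEnd_mem_weylMonoid i))
  have hinv : ∀ w : Function.End (Fin r → ℤ), w * simpleReflEnd A i * simpleReflEnd A i = w :=
    fun w => by rw [mul_assoc, simpleReflEnd_mul_self hdiag, mul_one]
  exact Finset.sum_nbij' _ _ hmem hmem (fun w _ => hinv w) (fun w _ => hinv w) (fun _ _ => rfl)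

lemma sum_simpleReflEnd_mul {M : Type*} [AddCommMonoid M] (f : Function.End (Fin r → ℤ) → M)
    (i : Fin r) :
    ∑ w ∈ hfin.toFinset, f (simpleReflEnd A i * w) = ∑ w ∈ hfin.toFinset, f w := by
  have hmem : ∀ w ∈ hfin.toFinset, simpleReflEnd A i * w ∈ hfin.toFinset := fun w hw =>
    hfin.mem_toFinset.2 (Submonoid.mul_mem _ (simpleReflEnd_mem_weylMonoid i)
      (hfin.mem_toFinset.1 hw))
  have hinv : ∀ w : Function.End (Fin r → ℤ),
      simpleReflEnd A i * (simpleReflEnd A i * w) = w :=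
    fun w => by rw [← mul_assoc, simpleReflEnd_mul_self hdiag, one_mul]
  exact Finset.sum_nbij' _ _ hmem hmem (fun w _ => hinv w) (fun w _ => hinv w) (fun _ _ => rfl)

lemma weylForm_invariant {w : Function.End (Fin r → ℤ)} (hw : w ∈ weylMonoid A)
    (x y : Fin r → ℤ) : weylForm hfin (w x) (w y) = weylForm hfin x y := by
  induction hw using Submonoid.closure_induction generalizing x y with
  | mem w hw =>
    obtain ⟨i, rfl⟩ := hw
    exact sum_mul_simpleReflEnd hfin hdiag (fun w => w x ⬝ᵥ w y) i
  | one => rfl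
  | mul v w _ _ hv hw => exact (hv (w x) (w y)).trans (hw x y)

lemma two_mul_weylForm_colRoot (x : Fin r → ℤ) (i : Fin r) :
    2 * weylForm hfin x (colRoot A i) = x i * weylForm hfin (colRoot A i) (colRoot A i) := by
  have h := weylForm_invariant hfin hdiag (simpleReflEnd_mem_weylMonoid i) x (colRoot A i)
  rw [simpleReflEnd_colRoot_self hdiag, simpleReflEnd_apply] at h
  simp only [map_sub, map_smul, map_neg, LinearMap.sub_apply, LinearMap.smul_apply,
    smul_eq_mul] at h
  linarith

lemma weylForm_colRoot_self_pos (i : Fin r) : 0 < weylForm hfin (colRoot A i) (colRoot A i) :=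
  weylForm_self_pos hfin fun h => by simpa [colRoot, hdiag] using congrFun h i

lemma weylForm_colRoot_colRoot_nonpos (hoff : ∀ i j, i ≠ j → A i j ≤ 0) {a b : Fin r}
    (hab : a ≠ b) : weylForm hfin (colRoot A a) (colRoot A b) ≤ 0 := by
  have h := two_mul_weylForm_colRoot hfin hdiag (colRoot A a) b
  have := weylForm_colRoot_self_pos hfin hdiag b
  have := hoff b a hab.symm
  simp only [colRoot] at h ⊢
  nlinarith

lemma two_mul_weylForm_single_sum (c : Fin r → ℤ) (k : Fin r) :
    2 * weylForm hfin (Pi.single k 1) (∑ i, c i • colRoot A i) =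
      c k * weylForm hfin (colRoot A k) (colRoot A k) := by
  simp only [map_sum, map_smul, smul_eq_mul, Finset.mul_sum, mul_left_comm (2 : ℤ),
    two_mul_weylForm_colRoot hfin hdiag]
  rw [Finset.sum_eq_single k (fun i _ hik => by simp [hik.symm])
    (by simp)]
  simp

end InvariantForm

variable (A) in
def rootCone : AddSubmonoid (Fin r → ℤ) := AddSubmonoid.closure (Set.range (colRoot A))

lemma colRoot_mem_rootCone (i : Fin r) : colRoot A i ∈ rootCone A :=
  AddSubmonoid.subset_closure ⟨i, rfl⟩

lemma zsmul_mem_rootCone {c : ℤ} (hc : 0 ≤ c) {x : Fin r → ℤ} (hx : x ∈ rootCone A) :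
    c • x ∈ rootCone A := by
  lift c to ℕ using hc
  rw [natCast_zsmul]
  exact AddSubmonoid.nsmul_mem _ hx _

lemma mem_rootCone_iff {x : Fin r → ℤ} :
    x ∈ rootCone A ↔ ∃ n : Fin r → ℕ, x = ∑ i, (n i : ℤ) • colRoot A i := by
  simp only [rootCone, AddSubmonoid.mem_closure_range_iff_of_fintype, natCast_zsmul]

lemma rootLE_iff_sub_mem_rootCone {μ lam : Fin r → ℤ} :
    rootLE A μ lam ↔ lam - μ ∈ rootCone A := by
  simp only [rootLE, mem_rootCone_iff, sub_eq_iff_eq_add']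

lemma rootLE_refl (μ : Fin r → ℤ) : rootLE A μ μ :=
  ⟨0, by simp⟩

lemma rootLE.trans {μ ν lam : Fin r → ℤ} (h₁ : rootLE A μ ν) (h₂ : rootLE A ν lam) :
    rootLE A μ lam := by
  rw [rootLE_iff_sub_mem_rootCone] at *
  simpa using add_mem h₂ h₁

section DominanceOrder

variable (hfin : (weylMonoid A : Set (Function.End (Fin r → ℤ))).Finite)
  (hdiag : ∀ i, A i i = 2)
include hfin hdiag

lemma weylForm_single_nonneg_of_mem_rootCone {x : Fin r → ℤ} (hx : x ∈ rootCone A)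
    (k : Fin r) :
    0 ≤ weylForm hfin (Pi.single k 1) x := by
  obtain ⟨n, rfl⟩ := mem_rootCone_iff.1 hx
  have h := two_mul_weylForm_single_sum hfin hdiag (fun i => n i) k
  have := weylForm_colRoot_self_pos hfin hdiag k
  have : (0 : ℤ) ≤ n k := Int.natCast_nonneg _
  nlinarith

lemma eq_zero_of_mem_rootCone_of_neg_mem {x : Fin r → ℤ} (hx : x ∈ rootCone A)
    (hnx : -x ∈ rootCone A) : x = 0 := by
  obtain ⟨n, rfl⟩ := mem_rootCone_iff.1 hx
  have hn : ∀ k, n k = 0 := fun k => by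
    have h₁ := weylForm_single_nonneg_of_mem_rootCone hfin hdiag hx k
    have h₂ := weylForm_single_nonneg_of_mem_rootCone hfin hdiag hnx k
    have h₃ := two_mul_weylForm_single_sum hfin hdiag (fun i => n i) k
    have := weylForm_colRoot_self_pos hfin hdiag k
    rw [map_neg] at h₂
    have : (n k : ℤ) * weylForm hfin (colRoot A k) (colRoot A k) = 0 := by linarith
    exact_mod_cast (mul_eq_zero.1 this).resolve_right (by positivity)
  simp [hn]

lemma rootLE_antisymm {μ lam : Fin r → ℤ} (h₁ : rootLE A μ lam) (h₂ : rootLE A lam μ) :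
    μ = lam := by
  rw [rootLE_iff_sub_mem_rootCone] at h₁ h₂
  rw [← neg_sub] at h₂
  exact (sub_eq_zero.1 (eq_zero_of_mem_rootCone_of_neg_mem hfin hdiag h₁ h₂)).symm

lemma sum_weylMonoid_apply_eq_zero (μ : Fin r → ℤ) : ∑ w ∈ hfin.toFinset, w μ = 0 := by
  funext k
  obtain ⟨f, hf⟩ :=
    exists_linearMap_eq_of_mem_weylMonoid (simpleReflEnd_mem_weylMonoid (A := A) k)
  have hfix :
      simpleReflEnd A k (∑ w ∈ hfin.toFinset, w μ) = ∑ w ∈ hfin.toFinset, w μ := by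
    rw [← hf, map_sum, hf]
    exact sum_simpleReflEnd_mul hfin hdiag (fun w => w μ) k
  have := congrFun hfix k
  rw [simpleReflEnd_apply_apply, hdiag] at this
  rw [Pi.zero_apply]
  linarith

lemma weylForm_single_sub_le {μ lam : Fin r → ℤ} (hμ : μ ∈ weightSet A lam) (k : Fin r) :
    weylForm hfin (Pi.single k 1) (lam - μ) ≤
      hfin.toFinset.card * weylForm hfin (Pi.single k 1) lam := by
  have hnonneg : ∀ w ∈ hfin.toFinset, 0 ≤ weylForm hfin (Pi.single k 1) (lam - w μ) := by
    intro w hw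
    exact weylForm_single_nonneg_of_mem_rootCone hfin hdiag
      (rootLE_iff_sub_mem_rootCone.1 (hμ w (hfin.mem_toFinset.1 hw))) k
  calc weylForm hfin (Pi.single k 1) (lam - μ)
      ≤ ∑ w ∈ hfin.toFinset, weylForm hfin (Pi.single k 1) (lam - w μ) := by
        have h := Finset.single_le_sum hnonneg (hfin.mem_toFinset.2 (Submonoid.one_mem _))
        exact h
    _ = hfin.toFinset.card * weylForm hfin (Pi.single k 1) lam := by
        rw [Finset.sum_congr rfl fun w _ => map_sub _ _ _, Finset.sum_sub_distrib,
          ← map_sum (weylForm hfin (Pi.single k 1)) (fun w : Function.End _ => w μ),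
          sum_weylMonoid_apply_eq_zero hfin hdiag, map_zero, sub_zero, Finset.sum_const,
          nsmul_eq_mul]

theorem weightSet_finite (lam : Fin r → ℤ) : (weightSet A lam).Finite := by
  let B : Fin r → ℕ := fun k =>
    (2 * hfin.toFinset.card * weylForm hfin (Pi.single k 1) lam).toNat
  refine ((Set.finite_Icc 0 B).image fun n => lam - ∑ i, (n i : ℤ) • colRoot A i).subset ?_
  intro μ hμ
  obtain ⟨n, hn⟩ := hμ 1 (Submonoid.one_mem _)
  change lam = μ + _ at hn
  have hsub : lam - μ = ∑ i, (n i : ℤ) • colRoot A i := by rw [hn, add_sub_cancel_left]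
  refine ⟨n, ⟨fun k => Nat.zero_le _, fun k => ?_⟩, by
    change lam - ∑ i, (n i : ℤ) • colRoot A i = μ
    rw [← hsub, sub_sub_cancel]⟩
  have h₁ := two_mul_weylForm_single_sum hfin hdiag (fun i => n i) k
  have h₂ := weylForm_single_sub_le hfin hdiag hμ k
  have := weylForm_colRoot_self_pos hfin hdiag k
  rw [hsub] at h₂
  have : (n k : ℤ) ≤ 2 * hfin.toFinset.card * weylForm hfin (Pi.single k 1) lam := by
    nlinarith [Int.natCast_nonneg (n k)]
  change n k ≤ (_ : ℤ).toNat
  omega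

end DominanceOrder

section Exchange

variable (hfin : (weylMonoid A : Set (Function.End (Fin r → ℤ))).Finite)
  (hdiag : ∀ i, A i i = 2)
include hfin hdiag

/-- `v` preserves `weylForm`, while `|p α_a + q α_b|² ≥ |α_a|² + |α_b|²` when `p q < 0`. -/
lemma zero_le_mul_of_apply_colRoot_eq (hoff : ∀ i j, i ≠ j → A i j ≤ 0)
    {v : Function.End (Fin r → ℤ)} (hv : v ∈ weylMonoid A) {a b : Fin r} (hab : a ≠ b)
    {p q : ℤ} (h : v (colRoot A a) = p • colRoot A a + q • colRoot A b) : 0 ≤ p * q := by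
  have hnorm := weylForm_invariant hfin hdiag hv (colRoot A a) (colRoot A a)
  simp only [h, map_add, map_smul, LinearMap.add_apply, LinearMap.smul_apply, smul_eq_mul,
    weylForm_comm hfin (colRoot A b) (colRoot A a)] at hnorm
  have ha := weylForm_colRoot_self_pos hfin hdiag a
  have hb := weylForm_colRoot_self_pos hfin hdiag b
  have hab' := weylForm_colRoot_colRoot_nonpos hfin hdiag hoff hab
  by_contra! hpq
  have hp : 1 ≤ p * p := by
    have : p ≠ 0 := by rintro rfl; simp at hpq
    have := mul_self_pos.2 this
    omega
  have hq : 1 ≤ q * q := by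
    have : q ≠ 0 := by rintro rfl; simp at hpq
    have := mul_self_pos.2 this
    omega
  nlinarith [mul_nonneg (sub_nonneg.2 hp) ha.le, mul_le_mul_of_nonneg_right hq hb.le,
    mul_nonneg_of_nonpos_of_nonpos hpq.le hab']

/-- `u s_i u⁻¹` and `s_t` are both the orthogonal reflection in the line through `u α_i`. -/
lemma simpleReflEnd_mul_eq_mul_simpleReflEnd {u : Function.End (Fin r → ℤ)}
    (hu : u ∈ weylMonoid A) {i t : Fin r} {p : ℤ} (h : u (colRoot A i) = p • colRoot A t) :
    simpleReflEnd A t * u = u * simpleReflEnd A i := by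
  have hnorm := weylForm_invariant hfin hdiag hu (colRoot A i) (colRoot A i)
  simp only [h, map_smul, LinearMap.smul_apply, smul_eq_mul] at hnorm
  have hi := weylForm_colRoot_self_pos hfin hdiag i
  have ht := weylForm_colRoot_self_pos hfin hdiag t
  have hp : p ≠ 0 := by rintro rfl; simp at hnorm; linarith
  funext x
  have hcoord : u x t = p * x i := by
    have e₁ := two_mul_weylForm_colRoot hfin hdiag x i
    rw [← weylForm_invariant hfin hdiag hu, h, map_smul, smul_eq_mul] at e₁
    have e₂ := two_mul_weylForm_colRoot hfin hdiag (u x) t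
    have : p * weylForm hfin (colRoot A t) (colRoot A t) * (u x t - p * x i) = 0 := by
      linear_combination (-p) * e₂ + e₁ - x i * hnorm
    simpa [hp, ht.ne', sub_eq_zero] using this
  obtain ⟨f, rfl⟩ := exists_linearMap_eq_of_mem_weylMonoid hu
  change simpleReflEnd A t (f x) = f (simpleReflEnd A i x)
  rw [simpleReflEnd_apply, simpleReflEnd_apply, map_sub, map_smul, h, hcoord, smul_smul,
    mul_comm]

lemma rankTwo_step (hoff : ∀ i j, i ≠ j → A i j ≤ 0) {i j t : Fin r} (hij : i ≠ j)
    (ht : t = i ∨ t = j) {u : Function.End (Fin r → ℤ)} (hu : u ∈ weylMonoid A) {p q : ℤ}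
    (hp : 0 ≤ p) (hq : 0 ≤ q) (h : u (colRoot A i) = p • colRoot A i + q • colRoot A j) :
    (∃ p' q' : ℤ, 0 ≤ p' ∧ 0 ≤ q' ∧
      (simpleReflEnd A t * u) (colRoot A i) = p' • colRoot A i + q' • colRoot A j) ∨
    simpleReflEnd A t * u * simpleReflEnd A i = u := by
  have hstu := Submonoid.mul_mem _ (simpleReflEnd_mem_weylMonoid t) hu
  have hcancel : ∀ c : ℤ, u (colRoot A i) = c • colRoot A t →
      simpleReflEnd A t * u * simpleReflEnd A i = u := fun c hc => by
    rw [simpleReflEnd_mul_eq_mul_simpleReflEnd hfin hdiag hu hc, mul_assoc,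
      simpleReflEnd_mul_self hdiag, mul_one]
  have hs : (simpleReflEnd A t * u) (colRoot A i) =
      p • colRoot A i + q • colRoot A j -
        (p • colRoot A i + q • colRoot A j) t • colRoot A t := by
    rw [← h]
    rfl
  set c := (p • colRoot A i + q • colRoot A j) t
  rcases ht with rfl | rfl
  · replace hs : (simpleReflEnd A t * u) (colRoot A t) =
        (p - c) • colRoot A t + q • colRoot A j := by
      rw [hs]; module
    have := zero_le_mul_of_apply_colRoot_eq hfin hdiag hoff hstu hij hs
    by_cases hc : 0 ≤ p - c
    · exact Or.inl ⟨p - c, q, hc, hq, hs⟩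
    · obtain rfl : q = 0 := by nlinarith
      exact Or.inr (hcancel p (by simpa using h))
  · replace hs : (simpleReflEnd A t * u) (colRoot A i) =
        p • colRoot A i + (q - c) • colRoot A t := by
      rw [hs]; module
    have := zero_le_mul_of_apply_colRoot_eq hfin hdiag hoff hstu hij hs
    by_cases hc : 0 ≤ q - c
    · exact Or.inl ⟨p, q - c, hp, hc, hs⟩
    · obtain rfl : p = 0 := by nlinarith
      exact Or.inr (hcancel q (by simpa using h))

theorem rankTwo_exchange (hoff : ∀ i j, i ≠ j → A i j ≤ 0) {i j : Fin r} (hij : i ≠ j) :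
    ∀ l : List (Fin r), (∀ t ∈ l, t = i ∨ t = j) →
      (∃ p q : ℤ, 0 ≤ p ∧ 0 ≤ q ∧
        weylWord A l (colRoot A i) = p • colRoot A i + q • colRoot A j) ∨
      ∃ l' : List (Fin r), (∀ t ∈ l', t = i ∨ t = j) ∧ l'.length < l.length ∧
        weylWord A l' = weylWord A l * simpleReflEnd A i
  | [], _ => Or.inl ⟨1, 0, zero_le_one, le_rfl, by simp; rfl⟩
  | t :: l, hl => by
    have ht : t = i ∨ t = j := hl t List.mem_cons_self
    have hl' : ∀ s ∈ l, s = i ∨ s = j := fun s hs => hl s (List.mem_cons_of_mem t hs)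
    rcases rankTwo_exchange hoff hij l hl' with ⟨p, q, hp, hq, h⟩ | ⟨l', hl'', hlen, hw⟩
    · rcases rankTwo_step hfin hdiag hoff hij ht (weylWord_mem_weylMonoid l) hp hq h with
        hpos | hcancel
      · exact Or.inl hpos
      · exact Or.inr ⟨l, hl', by simp, by rw [weylWord_cons, hcancel]⟩
    · exact Or.inr ⟨t :: l', List.forall_mem_cons.2 ⟨ht, hl''⟩, by simpa using hlen,
        by simp [hw, mul_assoc]⟩

end Exchange

variable (A) in
def RootPosOrShorter (l : List (Fin r)) (i : Fin r) : Prop :=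
  weylWord A l (colRoot A i) ∈ rootCone A ∨
    ∃ l' : List (Fin r), l'.length < l.length ∧ weylWord A l' = weylWord A l * simpleReflEnd A i

section Positivity

variable (hfin : (weylMonoid A : Set (Function.End (Fin r → ℤ))).Finite)
  (hdiag : ∀ i, A i i = 2) (hoff : ∀ i j, i ≠ j → A i j ≤ 0)
include hfin hdiag hoff

/-- Humphreys' reduction to rank two: write `w = v d` with `d` a word in `s_i, s_j`, and move
letters from `v` to `d` as long as `v s_i` or `v s_j` has a shorter expression. -/
lemma rootPosOrShorter_of_mul_eq {i j : Fin r} (hij : i ≠ j) {l : List (Fin r)}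
    (ih : ∀ l' : List (Fin r), l'.length < l.length → ∀ k, RootPosOrShorter A l' k)
    (lv ld : List (Fin r)) (hld : ∀ t ∈ ld, t = i ∨ t = j) (hne : ld ≠ [])
    (hw : weylWord A lv * weylWord A ld = weylWord A l)
    (hlen : lv.length + ld.length ≤ l.length) : RootPosOrShorter A l i := by
  induction hn : lv.length using Nat.strong_induction_on generalizing lv ld with
  | _ n ihn =>
  have hlv : lv.length < l.length := by
    have := List.length_pos_iff.2 hne
    omega
  have shorten : ∀ t, t = i ∨ t = j → ∀ lv' : List (Fin r), lv'.length < lv.length →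
      weylWord A lv' = weylWord A lv * simpleReflEnd A t → RootPosOrShorter A l i :=
    fun t ht lv' hlv' hw' => ihn _ (hn ▸ hlv') lv' (t :: ld)
      (List.forall_mem_cons.2 ⟨ht, hld⟩) (List.cons_ne_nil _ _)
      (by rw [hw', weylWord_cons, mul_assoc, ← mul_assoc (simpleReflEnd A t),
        simpleReflEnd_mul_self hdiag, one_mul, hw])
      (by simp only [List.length_cons]; omega) rfl
  rcases ih lv hlv i with hi | ⟨lv', h₁, h₂⟩
  swap
  · exact shorten i (Or.inl rfl) lv' h₁ h₂
  rcases ih lv hlv j with hj | ⟨lv', h₁, h₂⟩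
  swap
  · exact shorten j (Or.inr rfl) lv' h₁ h₂
  rcases rankTwo_exchange hfin hdiag hoff hij ld hld with
    ⟨p, q, hp, hq, hd⟩ | ⟨ld', -, hlen', hd'⟩
  · left
    obtain ⟨f, hf⟩ :=
      exists_linearMap_eq_of_mem_weylMonoid (weylWord_mem_weylMonoid (A := A) lv)
    rw [← hw]
    change weylWord A lv (weylWord A ld (colRoot A i)) ∈ rootCone A
    rw [hd, ← hf, map_add, map_smul, map_smul, hf]
    exact add_mem (zsmul_mem_rootCone hp hi) (zsmul_mem_rootCone hq hj)
  · right
    exact ⟨lv ++ ld', by simp only [List.length_append]; omega,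
      by rw [weylWord_append, hd', ← mul_assoc, hw]⟩

theorem rootPosOrShorter (l : List (Fin r)) (i : Fin r) : RootPosOrShorter A l i := by
  induction hn : l.length using Nat.strong_induction_on generalizing l i with
  | _ n ih =>
  rcases List.eq_nil_or_concat' l with rfl | ⟨l₁, j, rfl⟩
  · exact Or.inl (colRoot_mem_rootCone i)
  by_cases hji : j = i
  · subst hji
    exact Or.inr ⟨l₁, by simp, by simp [mul_assoc, simpleReflEnd_mul_self hdiag]⟩
  · exact rootPosOrShorter_of_mul_eq hfin hdiag hoff (Ne.symm hji)
      (fun l' hl' k => ih _ (hn ▸ hl') l' k rfl) l₁ [j] (by simp) (by simp) (by simp) (by simp)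

theorem rootLE_weylWord_apply {lam : Fin r → ℤ} (hlam : ∀ k, 0 ≤ lam k) (l : List (Fin r)) :
    rootLE A (weylWord A l lam) lam := by
  induction hn : l.length using Nat.strong_induction_on generalizing l with
  | _ n ih =>
  rcases List.eq_nil_or_concat' l with rfl | ⟨l₀, j, rfl⟩
  · exact rootLE_refl lam
  have hl₀ : l₀.length < n := by
    rw [← hn, List.length_append, List.length_singleton]
    omega
  rcases rootPosOrShorter hfin hdiag hoff l₀ j with hpos | ⟨l', hlen, hw⟩
  · refine rootLE.trans (rootLE_iff_sub_mem_rootCone.2 ?_) (ih _ hl₀ l₀ rfl)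
    obtain ⟨f, hf⟩ :=
      exists_linearMap_eq_of_mem_weylMonoid (weylWord_mem_weylMonoid (A := A) l₀)
    have hstep : weylWord A l₀ lam - weylWord A (l₀ ++ [j]) lam =
        lam j • weylWord A l₀ (colRoot A j) := by
      rw [weylWord_append, weylWord_singleton]
      change _ - weylWord A l₀ (simpleReflEnd A j lam) = _
      rw [simpleReflEnd_apply, ← hf, map_sub, map_smul, sub_sub_cancel]
    rw [hstep]
    exact zsmul_mem_rootCone (hlam j) hpos
  · rw [weylWord_append, weylWord_singleton, ← hw]
    exact ih _ (by omega) l' rfl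

theorem self_mem_weightSet {lam : Fin r → ℤ} (hlam : ∀ k, 0 ≤ lam k) :
    lam ∈ weightSet A lam :=
  fun w hw => by
    obtain ⟨l, rfl⟩ := exists_weylWord_eq_of_mem_weylMonoid hw
    exact rootLE_weylWord_apply hfin hdiag hoff hlam l

end Positivity

theorem stmt_16_general {r : ℕ} (A : Fin r → Fin r → ℤ)
    (hdiag : ∀ i, A i i = 2)
    (hoff : ∀ i j, i ≠ j → A i j ≤ 0)
    (hfin : (weylMonoid A : Set (Function.End (Fin r → ℤ))).Finite)
    (lam mu : Fin r → ℤ) (hlam : ∀ i, 0 ≤ lam i)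
    (hle : rootLE A mu lam) (hne : mu ≠ lam) :
    (weightSet A mu).ncard < (weightSet A lam).ncard := by
  have hsub : weightSet A mu ⊆ weightSet A lam := fun ν hν w hw => (hν w hw).trans hle
  have hlam_not_mem : lam ∉ weightSet A mu := fun h =>
    hne (rootLE_antisymm hfin hdiag hle (h 1 (Submonoid.one_mem _)))
  have hssub : weightSet A mu ⊂ weightSet A lam :=
    (Set.ssubset_iff_of_subset hsub).2
      ⟨lam, self_mem_weightSet hfin hdiag hoff hlam, hlam_not_mem⟩
  exact Set.ncard_lt_ncard hssub (weightSet_finite hfin hdiag lam)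

/-- let `𝔤` be a finite-dimensional simple complex Lie algebra, presented
by its Cartan matrix `A` (a generalized Cartan matrix, hypotheses `hdiag`, `hoff`,
`hzero`, of finite type, i.e. with finite Weyl group, hypothesis `hfin`, and
indecomposable, i.e. `𝔤` simple, hypothesis `hindec`).  If `λ, μ` are dominant integral
weights with `μ < λ` (i.e. `λ - μ` is a nonzero non-negative integer combination of
simple roots), then the number `R(μ) = |P(μ)|` of distinct weights of `L(μ)` is strictly
smaller than `R(λ) = |P(λ)|`. -/
theorem stmt_16 {r : ℕ} (hr : 0 < r) (A : Fin r → Fin r → ℤ)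
    (hdiag : ∀ i, A i i = 2)
    (hoff : ∀ i j, i ≠ j → A i j ≤ 0)
    (hzero : ∀ i j, A i j = 0 ↔ A j i = 0)
    (hindec : ∀ s : Set (Fin r), s.Nonempty → s ≠ Set.univ →
      ∃ i ∈ s, ∃ j, j ∉ s ∧ A i j ≠ 0)
    (hfin : (weylMonoid A : Set (Function.End (Fin r → ℤ))).Finite)
    (lam mu : Fin r → ℤ) (hlam : ∀ i, 0 ≤ lam i) (hmu : ∀ i, 0 ≤ mu i)
    (hle : rootLE A mu lam) (hne : mu ≠ lam) :
    (weightSet A mu).ncard < (weightSet A lam).ncard :=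
  stmt_16_general A hdiag hoff hfin lam mu hlam hle hne
end
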